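/- Let V₁ be a topological vector space containing a nonempty bounded open subset, and V₂ any topological vector space over the same field. Then every bounded linear map from V₁ to V₂ is continuous. -/

import Mathlib

/-!
Translating the bounded open set to the origin gives a bounded neighbourhood `V` of `0`. Its image
`f '' V` is bounded, hence absorbed by any neighbourhood `N` of `0` in `V₂`, say `f '' V ⊆ c • N`;
then `c⁻¹ • V` is a neighbourhood of `0` mapped into `N`, so `f` is continuous at `0`.
-/

open Pointwise Topology Bornology

theorem IsTopologicalAddGroup.of_continuousConstSMul {R M : Type*} [Ring R] [AddCommGroup M]
    [Module R M] [TopologicalSpace M] [ContinuousAdd M] [ContinuousConstSMul R M] :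
    IsTopologicalAddGroup M where
  continuous_neg := by simpa only [neg_one_smul] using continuous_const_smul (T := M) (-1 : R)

section Real

variable {E : Type*} [AddCommGroup E] [Module ℝ E] [TopologicalSpace E] [ContinuousSMul ℝ E]

theorem isVonNBounded_iff_forall_isOpen_exists_pos_subset_smul {s : Set E} :
    IsVonNBounded ℝ s ↔ ∀ W : Set E, IsOpen W → (0 : E) ∈ W → ∃ t > (0 : ℝ), s ⊆ t • W := by
  constructor
  · intro hs W hW hW0
    obtain ⟨r, hr, hsub⟩ := (hs (hW.mem_nhds hW0)).exists_pos
    exact ⟨r, hr, hsub r (Real.le_norm_self r)⟩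
  · intro hs V hV
    obtain ⟨B, ⟨hB, hBbal⟩, hBV⟩ := (nhds_basis_balanced ℝ E).mem_iff.mp hV
    obtain ⟨t, -, hst⟩ := hs (interior B) isOpen_interior (mem_interior_iff_mem_nhds.mpr hB)
    refine absorbs_iff_norm.mpr ⟨‖t‖, fun c hc => ?_⟩
    calc s ⊆ t • interior B := hst
      _ ⊆ t • B := Set.smul_set_mono interior_subset
      _ ⊆ c • B := hBbal.smul_mono hc
      _ ⊆ c • V := Set.smul_set_mono hBV

end Real

theorem exists_isVonNBounded_mem_nhds_zero {𝕜 E : Type*} [NormedField 𝕜] [AddCommGroup E]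
    [Module 𝕜 E] [TopologicalSpace E] [ContinuousAdd E] [ContinuousSMul 𝕜 E] {U : Set E}
    (hUo : IsOpen U) (hUne : U.Nonempty) (hU : IsVonNBounded 𝕜 U) : ∃ V ∈ 𝓝 (0 : E), IsVonNBounded 𝕜 V := by
  obtain ⟨x, hx⟩ := hUne
  exact ⟨-x +ᵥ U, (hUo.vadd (-x)).mem_nhds ⟨x, hx, neg_add_cancel x⟩, hU.vadd (-x)⟩

theorem bounded_linear_continuous_of_bounded_open_exists
    {V₁ V₂ : Type*} [AddCommGroup V₁] [Module ℝ V₁] [TopologicalSpace V₁]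
    [ContinuousAdd V₁] [ContinuousSMul ℝ V₁]
    [AddCommGroup V₂] [Module ℝ V₂] [TopologicalSpace V₂]
    [ContinuousAdd V₂] [ContinuousSMul ℝ V₂]
    (U₀ : Set V₁) (hU₀open : IsOpen U₀) (hU₀ne : U₀.Nonempty)
    (hU₀bdd : ∀ W : Set V₁, IsOpen W → (0 : V₁) ∈ W → ∃ t > (0 : ℝ), U₀ ⊆ t • W)
    (f : V₁ →ₗ[ℝ] V₂)
    (hf : ∀ E : Set V₁,
      (∀ U : Set V₁, IsOpen U → (0 : V₁) ∈ U → ∃ t > (0 : ℝ), E ⊆ t • U) →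
      (∀ U : Set V₂, IsOpen U → (0 : V₂) ∈ U → ∃ t > (0 : ℝ), f '' E ⊆ t • U)) :
    Continuous f := by
  have := IsTopologicalAddGroup.of_continuousConstSMul (R := ℝ) (M := V₁)
  have := IsTopologicalAddGroup.of_continuousConstSMul (R := ℝ) (M := V₂)
  simp only [← isVonNBounded_iff_forall_isOpen_exists_pos_subset_smul] at hU₀bdd hf
  obtain ⟨V, hV, hVbdd⟩ := exists_isVonNBounded_mem_nhds_zero hU₀open hU₀ne hU₀bdd
  exact (f.clmOfExistsBoundedImage ⟨V, hV, hf V hVbdd⟩).continuous
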